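/- arXiv:2511.16910 — 2 statements merged into one kernel-verified Lean document; each statement's English description precedes it below -/
import Mathlib

section
/- For a 3×3 matrix g over a commutative ring, let Λ²(g) denote the second compound matrix of g: the 3×3 matrix indexed by the two-element subsets {1,2}, {1,3}, {2,3} of {1,2,3} in lexicographic order, whose (I,J)-entry is the determinant of the 2×2 submatrix of g with rows I and columns J. Then: (i) for every g ∈ GL(3,ℤ), the matrix Λ²(g) lies in SL(3,ℤ); and (ii) for every M ∈ SL(3,ℤ) there exists g ∈ GL(3,ℤ) with Λ²(g) = M. That is, the image of the homomorphism Λ² : GL(3,ℤ) → GL(3,ℤ) is exactly SL(3,ℤ). -/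
/-!
Every 2×2 minor of a 3×3 matrix is, up to sign, the cofactor of the complementary entry, so
`Λ²(g) = J · (adj g)ᵀ · J` for the signed reversal matrix `J`, an involution of determinant 1.
Hence `det Λ²(g) = det (adj g) = (det g)²`, which is 1 on `GL(3,ℤ)`; and since
`adj (adj N) = det N • N` in dimension 3, `Λ²(adj (J Mᵀ J)) = det M • M`, which is `M` on
`SL(3,ℤ)`, while `det (adj (J Mᵀ J)) = (det M)² = 1`.
-/

/-- The two-element subsets `{1,2}, {1,3}, {2,3}` of `{1,2,3}` in lexicographic order,
each recorded as the increasing enumeration of its elements (0-indexed). -/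
def rowsOf : Fin 3 → Fin 2 → Fin 3 := ![![0, 1], ![0, 2], ![1, 2]]

def alt2 {R : Type*} [CommRing R] (g : Matrix (Fin 3) (Fin 3) R) :
    Matrix (Fin 3) (Fin 3) R :=
  fun I J => (g.submatrix (rowsOf I) (rowsOf J)).det

open Matrix

section

variable {R : Type*} [CommRing R]

/-- Row `I` of `signedReversal` picks out the entry complementary to the pair `rowsOf I`,
with the sign of the cofactor expansion. -/
def signedReversal : Matrix (Fin 3) (Fin 3) R := !![0, 0, 1; 0, -1, 0; 1, 0, 0]

theorem signedReversal_mul_self :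
    (signedReversal : Matrix (Fin 3) (Fin 3) R) * signedReversal = 1 := by
  ext i j
  fin_cases i <;> fin_cases j <;> simp [signedReversal, mul_apply, Fin.sum_univ_three]

theorem transpose_signedReversal :
    (signedReversal : Matrix (Fin 3) (Fin 3) R)ᵀ = signedReversal := by
  ext i j
  fin_cases i <;> fin_cases j <;> rfl

theorem signedReversal_conj_conj (M : Matrix (Fin 3) (Fin 3) R) :
    signedReversal * (signedReversal * M * signedReversal) * signedReversal = M := by
  rw [← mul_assoc, ← mul_assoc, signedReversal_mul_self, one_mul, mul_assoc,
    signedReversal_mul_self, mul_one]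

theorem det_signedReversal : (signedReversal : Matrix (Fin 3) (Fin 3) R).det = 1 := by
  simp [signedReversal, det_fin_three]

theorem alt2_eq_signedReversal_mul_adjugate_transpose (g : Matrix (Fin 3) (Fin 3) R) :
    alt2 g = signedReversal * (adjugate g)ᵀ * signedReversal := by
  ext I J
  simp only [alt2, det_fin_two, mul_apply, Fin.sum_univ_three]
  fin_cases I <;> fin_cases J <;> simp [rowsOf, signedReversal, adjugate_fin_three] <;> ring

theorem det_signedReversal_mul_mul (N : Matrix (Fin 3) (Fin 3) R) :
    (signedReversal * N * signedReversal).det = N.det := by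
  rw [det_mul, det_mul, det_signedReversal, one_mul, mul_one]

theorem det_alt2 (g : Matrix (Fin 3) (Fin 3) R) : (alt2 g).det = g.det ^ 2 := by
  rw [alt2_eq_signedReversal_mul_adjugate_transpose, det_mul, det_mul, det_transpose,
    det_adjugate, det_signedReversal]
  simp

theorem alt2_adjugate_signedReversal_conj_transpose (M : Matrix (Fin 3) (Fin 3) R) :
    alt2 (adjugate (signedReversal * Mᵀ * signedReversal)) = M.det • M := by
  rw [alt2_eq_signedReversal_mul_adjugate_transpose, adjugate_adjugate _ (by simp),
    det_signedReversal_mul_mul, det_transpose]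
  rw [transpose_smul, transpose_mul, transpose_mul, transpose_transpose,
    transpose_signedReversal, ← mul_assoc, Matrix.mul_smul, Matrix.smul_mul,
    signedReversal_conj_conj, Fintype.card_fin, pow_one]

end

/-- The image of `Λ² : GL(3,ℤ) → GL(3,ℤ)` is exactly `SL(3,ℤ)`:
(i) `Λ²(g) ∈ SL(3,ℤ)` for every `g ∈ GL(3,ℤ)`, and (ii) every `M ∈ SL(3,ℤ)` is of the
form `Λ²(g)` for some `g ∈ GL(3,ℤ)`. -/
theorem stmt5 :
    (∀ g : Matrix (Fin 3) (Fin 3) ℤ, (g.det = 1 ∨ g.det = -1) → (alt2 g).det = 1) ∧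
    (∀ M : Matrix (Fin 3) (Fin 3) ℤ, M.det = 1 →
      ∃ g : Matrix (Fin 3) (Fin 3) ℤ, (g.det = 1 ∨ g.det = -1) ∧ alt2 g = M) := by
  refine ⟨fun g hg => by rwa [det_alt2, sq_eq_one_iff], fun M hM => ?_⟩
  refine ⟨adjugate (signedReversal * Mᵀ * signedReversal), Or.inl ?_, ?_⟩
  · rw [det_adjugate, det_signedReversal_mul_mul, det_transpose, hM, one_pow]
  · rw [alt2_adjugate_signedReversal_conj_transpose, hM, one_smul]
end

section
/- Let m ≥ 1 and let c be a coefficient sequence on {1,…,m}. In the exterior algebra Λ = Λ_ℚ(ℚ^m) on the standard basis e₁, …, e_m, set a_σ = (1/c_σ) · e_σ for each σ ⊆ {1,…,m}, where e_σ is the product of the e_i over i ∈ σ in increasing order (e_∅ = 1). Then the additive subgroup of Λ generated by the elements {a_σ : σ ⊆ {1,…,m}} contains 1 and is closed under multiplication; that is, it is a subring of Λ. -/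
noncomputable section

/-- The images `e₁, …, e_m` of the standard basis vectors of `ℚ^m` in the exterior
algebra `Λ_ℚ(ℚ^m)`. -/
def eVec (m : ℕ) (i : Fin m) : ExteriorAlgebra ℚ (Fin m → ℚ) :=
  ExteriorAlgebra.ι ℚ (Pi.single i 1)

/-- The monomial `e_σ`: product of the `e_i` over `i ∈ σ`, in increasing order. -/
def eMonm (m : ℕ) (σ : Finset (Fin m)) : ExteriorAlgebra ℚ (Fin m → ℚ) :=
  ((σ.sort (· ≤ ·)).map (eVec m)).prod

/-- The additive subgroup of `Λ_ℚ(ℚ^m)` generated by the elements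
`a_σ = (1/c_σ) • e_σ`. -/
def wGen (m : ℕ) (c : Finset (Fin m) → ℕ) :
    AddSubgroup (ExteriorAlgebra ℚ (Fin m → ℚ)) :=
  AddSubgroup.closure (Set.range fun σ : Finset (Fin m) => (c σ : ℚ)⁻¹ • eMonm m σ)

/-! Since the `e_i` anticommute and square to zero, `e_σ e_τ = ±e_{σ ∪ τ}` if `σ` and `τ` are
disjoint and `e_σ e_τ = 0` otherwise. Writing `c_{σ ∪ τ} = k c_σ c_τ`, the product `a_σ a_τ` is then
`±k a_{σ ∪ τ}`, an integer multiple of a generator, and bilinearity extends this from generators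
to the whole additive subgroup. -/

theorem AddSubgroup.mul_mem_closure {R : Type*} [NonUnitalNonAssocRing R] {S : Set R}
    (hS : ∀ x ∈ S, ∀ y ∈ S, x * y ∈ closure S) {x y : R}
    (hx : x ∈ closure S) (hy : y ∈ closure S) : x * y ∈ closure S := by
  induction hx, hy using closure_induction₂ with
  | mem x y hx hy => exact hS x hx y hy
  | zero_left => simp [zero_mem]
  | zero_right => simp [zero_mem]
  | add_left _ _ _ _ _ _ h₁ h₂ => simpa [add_mul] using add_mem h₁ h₂
  | add_right _ _ _ _ _ _ h₁ h₂ => simpa [mul_add] using add_mem h₁ h₂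
  | neg_left _ _ _ _ h => simpa using neg_mem h
  | neg_right _ _ _ _ h => simpa using neg_mem h

namespace ExteriorAlgebra

variable {R M : Type*} [CommRing R] [AddCommGroup M] [Module R M]

theorem ι_mul_ι_anticomm (x y : M) : ι R x * ι R y = -(ι R y * ι R x) :=
  eq_neg_of_add_eq_zero_left (ι_add_mul_swap x y)

theorem exists_units_smul_prod_map_ι_of_perm {l l' : List M} (h : l.Perm l') :
    ∃ ε : ℤˣ, (l.map (ι R)).prod = ε • (l'.map (ι R)).prod := by
  induction h with
  | nil => exact ⟨1, by simp⟩
  | cons x _ ih =>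
    obtain ⟨ε, he⟩ := ih
    exact ⟨ε, by rw [List.map_cons, List.prod_cons, he, Units.smul_def, mul_smul_comm]; rfl⟩
  | swap x y l => exact ⟨-1, by simp [← mul_assoc, ι_mul_ι_anticomm (R := R) y x]⟩
  | trans _ _ ih₁ ih₂ =>
    obtain ⟨ε₁, h₁⟩ := ih₁
    obtain ⟨ε₂, h₂⟩ := ih₂
    exact ⟨ε₁ * ε₂, by rw [h₁, h₂, mul_smul]⟩

theorem prod_map_ι_eq_zero_of_not_nodup {l : List M} (h : ¬ l.Nodup) :
    (l.map (ι R)).prod = 0 := by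
  obtain ⟨x, hx⟩ := List.exists_duplicate_iff_not_nodup.mpr h
  obtain ⟨t, ht⟩ := (List.duplicate_iff_sublist.mp hx).exists_perm_append
  obtain ⟨ε, he⟩ := exists_units_smul_prod_map_ι_of_perm (R := R) ht
  simp [he, ← mul_assoc]

end ExteriorAlgebra

section WeightedSphereProduct

variable {m : ℕ}

theorem eMonm_eq_prod_map_ι (σ : Finset (Fin m)) :
    eMonm m σ = (((σ.sort (· ≤ ·)).map fun i => Pi.single i 1).map (ExteriorAlgebra.ι ℚ)).prod := by
  rw [List.map_map]
  rfl

@[simp]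
theorem eMonm_empty : eMonm m ∅ = 1 := by
  simp [eMonm]

theorem eMonm_mul_eMonm_of_disjoint {σ τ : Finset (Fin m)} (h : Disjoint σ τ) :
    ∃ ε : ℤˣ, eMonm m σ * eMonm m τ = ε • eMonm m (σ ∪ τ) := by
  have hperm : (σ.sort (· ≤ ·) ++ τ.sort (· ≤ ·)).Perm ((σ ∪ τ).sort (· ≤ ·)) := by
    rw [← Multiset.coe_eq_coe, ← Multiset.coe_add, Finset.sort_eq, Finset.sort_eq,
      Finset.sort_eq, ← Finset.disjUnion_eq_union σ τ h]
    rfl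
  simp only [eMonm_eq_prod_map_ι, ← List.prod_append, ← List.map_append]
  exact ExteriorAlgebra.exists_units_smul_prod_map_ι_of_perm (hperm.map _)

theorem eMonm_mul_eMonm_of_not_disjoint {σ τ : Finset (Fin m)} (h : ¬ Disjoint σ τ) :
    eMonm m σ * eMonm m τ = 0 := by
  simp only [eMonm_eq_prod_map_ι, ← List.prod_append, ← List.map_append]
  refine ExteriorAlgebra.prod_map_ι_eq_zero_of_not_nodup fun hnd => ?_
  obtain ⟨i, hiσ, hiτ⟩ := Finset.not_disjoint_iff.mp h
  exact List.disjoint_of_nodup_append hnd.of_map (by simpa using hiσ) (by simpa using hiτ)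

variable {c : Finset (Fin m) → ℕ}

theorem inv_smul_eMonm_mem_wGen (σ : Finset (Fin m)) : (c σ : ℚ)⁻¹ • eMonm m σ ∈ wGen m c :=
  AddSubgroup.subset_closure ⟨σ, rfl⟩

theorem inv_smul_eMonm_mem_wGen_of_dvd {σ : Finset (Fin m)} {d : ℕ} (hd : d ∣ c σ)
    (hc : c σ ≠ 0) : (d : ℚ)⁻¹ • eMonm m σ ∈ wGen m c := by
  obtain ⟨k, hk⟩ := hd
  have hcoef : (d : ℚ)⁻¹ = k * (c σ : ℚ)⁻¹ := by
    obtain ⟨hd0, hk0⟩ : (d : ℚ) ≠ 0 ∧ (k : ℚ) ≠ 0 := by simpa [hk] using hc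
    rw [hk, Nat.cast_mul]
    field_simp
  rw [hcoef, mul_smul, ← Int.cast_natCast, Int.cast_smul_eq_zsmul]
  exact AddSubgroup.zsmul_mem _ (inv_smul_eMonm_mem_wGen σ) _

theorem one_mem_wGen (hone : c ∅ = 1) : 1 ∈ wGen m c := by
  simpa [hone] using inv_smul_eMonm_mem_wGen (c := c) ∅

theorem inv_smul_eMonm_mul_inv_smul_eMonm_mem_wGen (hpos : ∀ σ, 0 < c σ)
    (hdvd : ∀ σ τ : Finset (Fin m), Disjoint σ τ → c σ * c τ ∣ c (σ ∪ τ)) (σ τ : Finset (Fin m)) :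
    ((c σ : ℚ)⁻¹ • eMonm m σ) * ((c τ : ℚ)⁻¹ • eMonm m τ) ∈ wGen m c := by
  rw [smul_mul_smul_comm, ← mul_inv, ← Nat.cast_mul]
  by_cases h : Disjoint σ τ
  · obtain ⟨ε, he⟩ := eMonm_mul_eMonm_of_disjoint h
    rw [he, smul_comm, Units.smul_def]
    exact AddSubgroup.zsmul_mem _
      (inv_smul_eMonm_mem_wGen_of_dvd (hdvd σ τ h) (hpos _).ne') _
  · rw [eMonm_mul_eMonm_of_not_disjoint h, smul_zero]
    exact zero_mem _

theorem mul_mem_wGen (hpos : ∀ σ, 0 < c σ)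
    (hdvd : ∀ σ τ : Finset (Fin m), Disjoint σ τ → c σ * c τ ∣ c (σ ∪ τ))
    {x y : ExteriorAlgebra ℚ (Fin m → ℚ)} (hx : x ∈ wGen m c) (hy : y ∈ wGen m c) :
    x * y ∈ wGen m c := by
  refine AddSubgroup.mul_mem_closure ?_ hx hy
  rintro _ ⟨σ, rfl⟩ _ ⟨τ, rfl⟩
  exact inv_smul_eMonm_mul_inv_smul_eMonm_mem_wGen hpos hdvd σ τ

end WeightedSphereProduct

theorem stmt9_general (m : ℕ) (c : Finset (Fin m) → ℕ)
    (hpos : ∀ σ, 0 < c σ)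
    (hone : ∀ σ : Finset (Fin m), σ.card ≤ 1 → c σ = 1)
    (hdvd : ∀ σ τ : Finset (Fin m), Disjoint σ τ → c σ * c τ ∣ c (σ ∪ τ)) :
    (1 : ExteriorAlgebra ℚ (Fin m → ℚ)) ∈ wGen m c ∧
    ∀ x y : ExteriorAlgebra ℚ (Fin m → ℚ),
      x ∈ wGen m c → y ∈ wGen m c → x * y ∈ wGen m c :=
  ⟨one_mem_wGen (hone ∅ (by simp)), fun _ _ => mul_mem_wGen hpos hdvd⟩

/-- For a coefficient sequence `c`, the additive subgroup of
`Λ_ℚ(ℚ^m)` generated by the `a_σ = (1/c_σ) • e_σ` contains `1` and is closed under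
multiplication, i.e. is a subring. -/
theorem stmt9 (m : ℕ) (hm : 1 ≤ m) (c : Finset (Fin m) → ℕ)
    (hpos : ∀ σ, 0 < c σ)
    (hone : ∀ σ : Finset (Fin m), σ.card ≤ 1 → c σ = 1)
    (hdvd : ∀ σ τ : Finset (Fin m), Disjoint σ τ → c σ * c τ ∣ c (σ ∪ τ)) :
    (1 : ExteriorAlgebra ℚ (Fin m → ℚ)) ∈ wGen m c ∧
    ∀ x y : ExteriorAlgebra ℚ (Fin m → ℚ),
      x ∈ wGen m c → y ∈ wGen m c → x * y ∈ wGen m c :=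
  stmt9_general m c hpos hone hdvd

end
end
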